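/- arXiv:2510.20698 — 4 statements merged into one kernel-verified Lean document; each statement's English description precedes it below -/
import Mathlib

section
/- Let n ≥ 1 and k ≥ 1 be natural numbers, and for each i ∈ {1, …, n} define a(i) = k · (number of permutations σ of {1, …, n} with σ⁻¹(i) < σ⁻¹(j) for all j < i). Then (i) a(i) = k·n!/i for every i; (ii) a is strictly decreasing: a(i) > a(j) whenever 1 ≤ i < j ≤ n; and (iii) the outcome a is individually fair for every creator: for each i, the cardinality of {j ∈ {1, …, n} : a(j) ≥ a(i)} equals i, and in particular is at most i. -/
/-!
Among any set of creators, each is equally likely to be the first one shown: swapping two of them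
is a bijection of the permutations that exchanges the events "this one comes first". Applied to
the top `i + 1` creators, creator `i` is followed by exactly a `1 / (i + 1)` share of the users,
which is strictly decreasing in `i`, so the creators are ranked by follower count exactly as by
quality.
-/

open Finset Equiv

namespace Equiv.Perm

variable {α : Type*} [Fintype α] [LinearOrder α]

/-- `σ` shows `σ p` at step `p`, so `σ.symm x` is the step at which `x` is shown. -/
def firstAmong (s : Finset α) (m : α) : Finset (Perm α) :=
  {σ | ∀ j ∈ s, j ≠ m → σ.symm m < σ.symm j}

lemma trans_swap_mem_firstAmong {s : Finset α} {m m' : α} (hm : m ∈ s) (hm' : m' ∈ s)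
    {σ : Perm α} (hσ : σ ∈ firstAmong s m) : σ.trans (swap m m') ∈ firstAmong s m' := by
  simp only [firstAmong, mem_filter, mem_univ, true_and, symm_trans_apply, symm_swap,
    swap_apply_right] at hσ ⊢
  intro j hj hjm'
  apply hσ _ ((swap_bijOn_self (s := (s : Set α)) (iff_of_true hm hm')).mapsTo hj)
  rw [Ne, swap_apply_eq_iff, swap_apply_left]
  exact hjm'

lemma card_firstAmong_le {s : Finset α} {m m' : α} (hm : m ∈ s) (hm' : m' ∈ s) :
    #(firstAmong s m) ≤ #(firstAmong s m') :=
  card_le_card_of_injOn (fun σ => σ.trans (swap m m'))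
    (fun _ hσ => trans_swap_mem_firstAmong hm hm' hσ)
    (fun _ _ _ _ h => mul_left_cancel h)

lemma card_firstAmong_eq {s : Finset α} {m m' : α} (hm : m ∈ s) (hm' : m' ∈ s) :
    #(firstAmong s m) = #(firstAmong s m') :=
  (card_firstAmong_le hm hm').antisymm (card_firstAmong_le hm' hm)

lemma pairwiseDisjoint_firstAmong (s : Finset α) :
    (s : Set α).PairwiseDisjoint (firstAmong s) := by
  intro m hm m' hm' hne
  refine disjoint_left.mpr fun σ hσ hσ' => ?_
  simp only [firstAmong, mem_filter, mem_univ, true_and] at hσ hσ'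
  exact (hσ m' hm' hne.symm).asymm (hσ' m hm hne)

lemma biUnion_firstAmong {s : Finset α} (hs : s.Nonempty) :
    s.biUnion (firstAmong s) = univ := by
  refine eq_univ_of_forall fun σ => ?_
  obtain ⟨m, hm, hmin⟩ := s.exists_min_image σ.symm hs
  refine mem_biUnion.mpr ⟨m, hm, ?_⟩
  simp only [firstAmong, mem_filter, mem_univ, true_and]
  exact fun j hj hjm => (hmin j hj).lt_of_ne (σ.symm.injective.ne hjm.symm)

theorem card_firstAmong_mul_card {s : Finset α} {m : α} (hm : m ∈ s) :
    #(firstAmong s m) * #s = (Fintype.card α).factorial := by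
  rw [← Fintype.card_perm, ← card_univ, ← biUnion_firstAmong ⟨m, hm⟩,
    card_biUnion (pairwiseDisjoint_firstAmong s),
    sum_congr rfl fun j hj => card_firstAmong_eq hj hm, sum_const, smul_eq_mul, mul_comm]

end Equiv.Perm

lemma strictAnti_of_mul_succ_eq {n c : ℕ} (hc : 0 < c) {a : Fin n → ℕ}
    (ha : ∀ i : Fin n, a i * ((i : ℕ) + 1) = c) : StrictAnti a := by
  intro i j hij
  have hai : 0 < a i := Nat.pos_of_ne_zero fun h => by simpa [h, hc.ne] using ha i
  refine Nat.lt_of_mul_lt_mul_right (a := (j : ℕ) + 1) ?_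
  calc a j * ((j : ℕ) + 1) = a i * ((i : ℕ) + 1) := by rw [ha, ha]
    _ < a i * ((j : ℕ) + 1) := by gcongr; exact hij

theorem permutation_strategy_fair_general (n k : ℕ) (hk : 1 ≤ k)
    (a : Fin n → ℕ)
    (ha : ∀ i : Fin n, a i =
      k * (Finset.univ.filter (fun σ : Equiv.Perm (Fin n) =>
        ∀ j : Fin n, j < i → σ.symm i < σ.symm j)).card) :
    (∀ i : Fin n, a i = k * n.factorial / ((i : ℕ) + 1)) ∧
    (∀ i j : Fin n, i < j → a j < a i) ∧
    (∀ i : Fin n,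
      (Finset.univ.filter (fun j : Fin n => a i ≤ a j)).card = (i : ℕ) + 1 ∧
      (Finset.univ.filter (fun j : Fin n => a i ≤ a j)).card ≤ (i : ℕ) + 1) := by
  have hfirst (i : Fin n) : Perm.firstAmong (Iic i) i =
      univ.filter (fun σ : Perm (Fin n) => ∀ j : Fin n, j < i → σ.symm i < σ.symm j) := by
    ext σ
    simp only [Perm.firstAmong, mem_filter, mem_univ, true_and, mem_Iic, lt_iff_le_and_ne, and_imp]
  have hmul (i : Fin n) : a i * ((i : ℕ) + 1) = k * n.factorial := by
    rw [ha, ← hfirst, mul_assoc, ← Fin.card_Iic, Perm.card_firstAmong_mul_card (mem_Iic.mpr le_rfl),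
      Fintype.card_fin]
  have hanti : StrictAnti a := strictAnti_of_mul_succ_eq (Nat.mul_pos hk n.factorial_pos) hmul
  refine ⟨fun i => (Nat.div_eq_of_eq_mul_left i.val.succ_pos (hmul i).symm).symm,
    fun i j hij => hanti hij, fun i => ?_⟩
  have hrank : univ.filter (fun j : Fin n => a i ≤ a j) = Iic i := by
    ext j
    simp [hanti.le_iff_ge]
  rw [hrank, Fin.card_Iic]
  exact ⟨rfl, le_rfl⟩

/-- Let `n ≥ 1` and `k ≥ 1`. For each creator index `i : Fin n`
(representing creator `CC_(i+1)`, so that smaller index means higher quality), let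
`a i = k · #{σ : Equiv.Perm (Fin n) | σ⁻¹(i) < σ⁻¹(j) for all j < i}`, the follower
count of creator `i` when each of the `n!` permutations of the creators is shown, in
order, to exactly `k` users.  Then
(i) `a i = k · n! / (i + 1)` for every `i` (with `i + 1` the 1-based rank of `i`);
(ii) `a` is strictly decreasing; and
(iii) the outcome `a` is individually fair for every creator: for each `i`, the number
of `j` with `a j ≥ a i` equals the 1-based rank `i + 1`, and in particular is at most
`i + 1`. -/
theorem permutation_strategy_fair (n k : ℕ) (hn : 1 ≤ n) (hk : 1 ≤ k)
    (a : Fin n → ℕ)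
    (ha : ∀ i : Fin n, a i =
      k * (Finset.univ.filter (fun σ : Equiv.Perm (Fin n) =>
        ∀ j : Fin n, j < i → σ.symm i < σ.symm j)).card) :
    (∀ i : Fin n, a i = k * n.factorial / ((i : ℕ) + 1)) ∧
    (∀ i j : Fin n, i < j → a j < a i) ∧
    (∀ i : Fin n,
      (Finset.univ.filter (fun j : Fin n => a i ≤ a j)).card = (i : ℕ) + 1 ∧
      (Finset.univ.filter (fun j : Fin n => a i ≤ a j)).card ≤ (i : ℕ) + 1) :=
  permutation_strategy_fair_general n k hk a ha
end

section
/- In the noisy ordered pairwise comparison model with parameters k ∈ ℕ and p ∈ [0, 1], the expectation of X_j (the follower count of the lower-quality creator after both comparison steps) equals kp + 2kp(1 − p) = kp(3 − 2p). -/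
open MeasureTheory ProbabilityTheory

/-- The joint distribution of the follower counts `(X_i, X_j)` of the higher-quality
creator `CC_i` and the lower-quality creator `CC_j` in the noisy ordered pairwise
comparison model with group size `k` and signal `p ∈ [0, 1]`:
draw `x ~ Binomial(k, p)` (followers of `CC_i` from the `(i, j)` group at step 1);
independently draw `b₁ ~ Binomial(k, p)`, `b₂ ~ Binomial(k, p)`, `c ~ Binomial(x, 1 − p)`
and `d ~ Binomial(k − x, p)`; set `X_i = b₁ + x` and `X_j = b₂ + c + d`. -/
noncomputable def noisyPair (k : ℕ) (p : ℝ) (hp0 : 0 ≤ p) (hp1 : p ≤ 1) : PMF (ℕ × ℕ) :=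
  (PMF.binomial (Real.toNNReal p) (Real.toNNReal_le_one.mpr hp1) k).bind fun x =>
  (PMF.binomial (Real.toNNReal p) (Real.toNNReal_le_one.mpr hp1) k).bind fun b₁ =>
  (PMF.binomial (Real.toNNReal p) (Real.toNNReal_le_one.mpr hp1) k).bind fun b₂ =>
  (PMF.binomial (1 - Real.toNNReal p) tsub_le_self (x : ℕ)).bind fun c =>
  (PMF.binomial (Real.toNNReal p) (Real.toNNReal_le_one.mpr hp1) (k - (x : ℕ))).map fun d =>
  ((b₁ : ℕ) + (x : ℕ), (b₂ : ℕ) + (c : ℕ) + (d : ℕ))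

/-!
Condition on the first-step count `x`. Given `x`, the draws `b₂`, `c`, `d` are binomial with means
`kp`, `x(1 - p)` and `(k - x)p`, so `E[X_j | x] = kp + x(1 - p) + (k - x)p`; averaging over
`x ~ Bin(k, p)` gives `kp + kp(1 - p) + kp(1 - p) = kp(3 - 2p)`. Every draw ranges over a finite
type, which makes all the integrands integrable and lets the tower property be applied one draw at
a time.
-/

set_option linter.deprecated false

universe u

namespace PMF

theorem monad_bind_eq_bind {α β : Type u} (p : PMF α) (f : α → PMF β) : p >>= f = p.bind f :=
  rfl

theorem monad_pure_eq_pure {α : Type u} (a : α) : (Pure.pure a : PMF α) = PMF.pure a :=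
  rfl

section Fintype

variable {α β E : Type*} [Fintype α] [MeasurableSpace β] [NormedAddCommGroup E]

theorem toMeasure_bind_of_fintype (p : PMF α) (q : α → PMF β) :
    (p.bind q).toMeasure = ∑ a, p a • (q a).toMeasure := by
  ext s hs
  simp [toMeasure_bind_apply _ _ _ hs, tsum_fintype]

theorem integrable_bind_of_fintype {p : PMF α} {q : α → PMF β} {f : β → E}
    (hf : ∀ a, Integrable f (q a).toMeasure) : Integrable f (p.bind q).toMeasure := by
  rw [toMeasure_bind_of_fintype]
  exact integrable_finset_sum_measure.2 fun a _ => (hf a).smul_measure (apply_ne_top p a)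

theorem integral_bind_of_fintype [MeasurableSpace α] [MeasurableSingletonClass α]
    [NormedSpace ℝ E] [CompleteSpace E] (p : PMF α) (q : α → PMF β) {f : β → E}
    (hf : ∀ a, Integrable f (q a).toMeasure) :
    ∫ b, f b ∂(p.bind q).toMeasure = ∫ a, ∫ b, f b ∂(q a).toMeasure ∂p.toMeasure := by
  rw [toMeasure_bind_of_fintype, integral_finset_sum_measure
    fun a _ => (hf a).smul_measure (apply_ne_top p a), integral_eq_sum]
  simp [integral_smul_measure]

end Fintype

section Pure

variable {β E : Type*} [MeasurableSpace β] [MeasurableSingletonClass β] [NormedAddCommGroup E]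

theorem integrable_pure (b : β) (f : β → E) : Integrable f (pure b).toMeasure := by
  rw [toMeasure_pure]
  exact integrable_dirac enorm_lt_top

theorem integral_pure [NormedSpace ℝ E] [CompleteSpace E] (b : β) (f : β → E) :
    ∫ x, f x ∂(pure b).toMeasure = f b := by
  rw [toMeasure_pure, integral_dirac]

end Pure

theorem toReal_binomial_apply (q : NNReal) (h : q ≤ 1) (n : ℕ) (i : Fin (n + 1)) :
    (binomial q h n i).toReal = n.choose i * (q : ℝ) ^ (i : ℕ) * (1 - q) ^ (n - i) := by
  rw [binomial_apply, Fin.val_last, ENNReal.toReal_mul, ENNReal.toReal_mul, ENNReal.toReal_pow,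
    ENNReal.toReal_pow, ENNReal.toReal_sub_of_le (by exact_mod_cast h) ENNReal.one_ne_top]
  simp only [ENNReal.toReal_one, ENNReal.toReal_natCast, ENNReal.coe_toReal]
  ring

theorem binomial_expectation (q : NNReal) (h : q ≤ 1) (n : ℕ) :
    ∫ i, ((i : ℕ) : ℝ) ∂(binomial q h n).toMeasure = n * q := by
  have bernstein := congrArg (Polynomial.eval (q : ℝ)) (bernsteinPolynomial.sum_smul ℝ n)
  simp only [bernsteinPolynomial, Polynomial.eval_finset_sum,
    Polynomial.eval_mul, Polynomial.eval_pow, Polynomial.eval_sub, Polynomial.eval_X,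
    Polynomial.eval_one, Polynomial.eval_natCast, nsmul_eq_mul] at bernstein
  rw [integral_eq_sum, ← bernstein]
  simp only [toReal_binomial_apply, smul_eq_mul]
  rw [Fin.sum_univ_eq_sum_range (fun i => (n.choose i * (q : ℝ) ^ i * (1 - q) ^ (n - i)) * i)]
  exact Finset.sum_congr rfl fun i _ => mul_comm _ _

end PMF

/-- In the noisy ordered pairwise comparison model with parameters
`k ∈ ℕ` and `p ∈ [0, 1]`, the expectation of `X_j` (the follower count of the
lower-quality creator after both comparison steps) equals
`kp + 2kp(1 − p) = kp(3 − 2p)`. -/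
theorem expectation_Xj (k : ℕ) (p : ℝ) (hp0 : 0 ≤ p) (hp1 : p ≤ 1) :
    ∫ ω, ((ω.2 : ℕ) : ℝ) ∂(noisyPair k p hp0 hp1).toMeasure = k * p * (3 - 2 * p) := by
  have hq : (p.toNNReal : ℝ) = p := Real.coe_toNNReal p hp0
  have hq' : ((1 - p.toNNReal : NNReal) : ℝ) = 1 - p := by
    rw [NNReal.coe_sub (Real.toNNReal_le_one.mpr hp1), NNReal.coe_one, hq]
  -- `noisyPair` casts the `Fin`-valued draw `d` to `ℕ` by a monadic coercion; fuse it into the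
  -- last bind.
  simp only [noisyPair, PMF.map, PMF.monad_bind_eq_bind, PMF.monad_pure_eq_pure, PMF.bind_bind,
    PMF.pure_bind, Function.comp_apply]
  -- The integrability side conditions nest one level per draw, five draws in all.
  simp (maxDischargeDepth := 5) only [PMF.integral_bind_of_fintype, PMF.integrable_bind_of_fintype,
    PMF.integrable_pure, PMF.integral_pure, implies_true]
  push_cast
  simp only [Integrable.of_finite, integral_add, integral_sub, integral_mul_const,
    integral_const, probReal_univ, smul_eq_mul, one_mul, PMF.binomial_expectation, Fin.is_le,
    Nat.cast_sub, hq, hq']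
  ring
end

section
/- In the noisy ordered pairwise comparison model with parameters k ∈ ℕ and p ∈ [0, 1], the variance of X_j (the follower count of the lower-quality creator) equals 2kp(1 − p) + (1 − 2p)²·kp(1 − p) = kp(1 − p)(2 + (1 − 2p)²). -/
/-!
Condition on the first draw `x`. Given `x`, the count `X_j = b₂ + c + d` is a sum of independent
binomials, with variance `kp(1 - p) + xp(1 - p) + (k - x)p(1 - p) = 2kp(1 - p)` whatever `x` is,
and mean `kp + x(1 - p) + (k - x)p = 2kp + (1 - 2p)x`. The law of total variance then gives
`2kp(1 - p) + (1 - 2p)² Var(x)` with `Var(x) = kp(1 - p)`.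
-/

open MeasureTheory ProbabilityTheory

set_option linter.deprecated false

namespace PMF

variable {α β : Type*} [MeasurableSpace β]

theorem toMeasure_bind_eq_sum [Fintype α] (p : PMF α) (f : α → PMF β) :
    (p.bind f).toMeasure = ∑ a, p a • (f a).toMeasure := by
  ext s hs
  rw [toMeasure_bind_apply _ _ _ hs, Measure.finset_sum_apply, tsum_fintype]
  simp only [Measure.smul_apply, smul_eq_mul]

section Bind

variable [Fintype α] {p : PMF α} {f : α → PMF β} {X : β → ℝ}

theorem integrable_bind (hX : ∀ a, Integrable X (f a).toMeasure) :
    Integrable X (p.bind f).toMeasure := by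
  rw [toMeasure_bind_eq_sum]
  exact integrable_finset_sum_measure.2 fun a _ => (hX a).smul_measure (p.apply_ne_top a)

theorem integral_bind [MeasurableSpace α] [MeasurableSingletonClass α]
    (hX : ∀ a, Integrable X (f a).toMeasure) :
    ∫ b, X b ∂(p.bind f).toMeasure = ∫ a, ∫ b, X b ∂(f a).toMeasure ∂p.toMeasure := by
  rw [toMeasure_bind_eq_sum,
    integral_finset_sum_measure fun a _ => (hX a).smul_measure (p.apply_ne_top a),
    integral_eq_sum]
  simp only [integral_smul_measure, smul_eq_mul]

variable [Countable β] [MeasurableSingletonClass β]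

theorem memLp_two_bind (hX : ∀ a, MemLp X 2 (f a).toMeasure) :
    MemLp X 2 (p.bind f).toMeasure :=
  (memLp_two_iff_integrable_sq .of_discrete).2 (integrable_bind fun a => (hX a).integrable_sq)

theorem variance_bind [MeasurableSpace α] [MeasurableSingletonClass α]
    (hX : ∀ a, MemLp X 2 (f a).toMeasure) :
    Var[X; (p.bind f).toMeasure] = ∫ a, Var[X; (f a).toMeasure] ∂p.toMeasure
      + Var[fun a => ∫ b, X b ∂(f a).toMeasure; p.toMeasure] := by
  have second_moment : ∀ a, ∫ b, X b ^ 2 ∂(f a).toMeasure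
      = Var[X; (f a).toMeasure] + (∫ b, X b ∂(f a).toMeasure) ^ 2 := fun a => by
    rw [variance_eq_sub (hX a)]
    simp
  rw [variance_eq_sub (memLp_two_bind hX), variance_eq_sub .of_discrete]
  simp only [Pi.pow_apply]
  rw [integral_bind fun a => (hX a).integrable one_le_two,
    integral_bind fun a => (hX a).integrable_sq]
  simp only [second_moment]
  rw [integral_add .of_finite .of_finite]
  ring

end Bind

section Binomial

variable (q : NNReal) (h : q ≤ 1) (n : ℕ)

theorem binomial_apply_toReal (i : Fin (n + 1)) :
    (binomial q h n i).toReal = (bernsteinPolynomial ℝ n i).eval (q : ℝ) := by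
  rw [binomial_apply, bernsteinPolynomial]
  simp [ENNReal.toReal_sub_of_le (ENNReal.coe_le_one_iff.2 h) ENNReal.one_ne_top]
  ring

theorem integral_binomial_eq_sum_bernstein (g : ℕ → ℝ) :
    ∫ i, g i ∂(binomial q h n).toMeasure
      = ∑ ν ∈ Finset.range (n + 1), (bernsteinPolynomial ℝ n ν).eval (q : ℝ) * g ν := by
  rw [integral_eq_sum]
  simp only [binomial_apply_toReal, smul_eq_mul]
  exact Fin.sum_univ_eq_sum_range (fun ν => (bernsteinPolynomial ℝ n ν).eval (q : ℝ) * g ν) _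

theorem integral_binomial_val :
    ∫ i, ((i : ℕ) : ℝ) ∂(binomial q h n).toMeasure = n * q := by
  have sum_smul := congrArg (Polynomial.eval (q : ℝ)) (bernsteinPolynomial.sum_smul (R := ℝ) n)
  simp only [Polynomial.eval_finset_sum, nsmul_eq_mul, Polynomial.eval_mul,
    Polynomial.eval_natCast, Polynomial.eval_X] at sum_smul
  rw [integral_binomial_eq_sum_bernstein q h n Nat.cast, ← sum_smul]
  exact Finset.sum_congr rfl fun ν _ => mul_comm _ _

theorem variance_binomial_val :
    Var[fun i : Fin (n + 1) => ((i : ℕ) : ℝ); (binomial q h n).toMeasure] = n * q * (1 - q) := by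
  have variance := congrArg (Polynomial.eval (q : ℝ)) (bernsteinPolynomial.variance (R := ℝ) n)
  simp only [Polynomial.eval_finset_sum, Polynomial.eval_mul, Polynomial.eval_pow,
    Polynomial.eval_sub, nsmul_eq_mul, Polynomial.eval_X, Polynomial.eval_natCast,
    Polynomial.eval_one] at variance
  rw [variance_eq_integral .of_discrete, integral_binomial_val,
    integral_binomial_eq_sum_bernstein q h n fun ν => ((ν : ℝ) - n * q) ^ 2, ← variance]
  exact Finset.sum_congr rfl fun ν _ => by ring

end Binomial

end PMF

def HasMeanVar {Ω : Type*} [MeasurableSpace Ω] (X : Ω → ℝ) (μ : Measure Ω) (m v : ℝ) : Prop :=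
  MemLp X 2 μ ∧ μ[X] = m ∧ Var[X; μ] = v

namespace HasMeanVar

variable {Ω : Type*} [MeasurableSpace Ω] {X : Ω → ℝ} {μ : Measure Ω} {m v : ℝ}

theorem congr {m' v' : ℝ} (h : HasMeanVar X μ m v) (hm : m = m') (hv : v = v') :
    HasMeanVar X μ m' v' :=
  hm ▸ hv ▸ h

variable [IsProbabilityMeasure μ]

theorem const (c : ℝ) : HasMeanVar (fun _ => c) μ c 0 :=
  ⟨memLp_const c, by simp, by simp [variance_eq_integral aemeasurable_const]⟩

theorem const_add_mul (h : HasMeanVar X μ m v) (a b : ℝ) :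
    HasMeanVar (fun ω => a + b * X ω) μ (a + b * m) (b ^ 2 * v) := by
  refine ⟨(memLp_const a).add (h.1.const_mul b), ?_, ?_⟩
  · rw [integral_add (integrable_const a) ((h.1.integrable one_le_two).const_mul b),
      integral_const, integral_const_mul, h.2.1]
    simp
  · rw [variance_const_add (h.1.aestronglyMeasurable.const_mul b), variance_const_mul, h.2.2]

end HasMeanVar

namespace PMF

variable {α β : Type*} [MeasurableSpace β] [MeasurableSingletonClass β]

theorem hasMeanVar_pure (X : β → ℝ) (b : β) : HasMeanVar X (pure b).toMeasure (X b) 0 := by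
  rw [toMeasure_pure]
  exact ⟨(memLp_const (X b)).ae_eq (ae_eq_dirac X).symm, integral_dirac X b, variance_dirac b⟩

variable [Countable β]

theorem hasMeanVar_map [MeasurableSpace α] [Countable α] [MeasurableSingletonClass α] {p : PMF α}
    {g : α → β} {X : β → ℝ} {m v : ℝ} (h : HasMeanVar (X ∘ g) p.toMeasure m v) :
    HasMeanVar X (p.map g).toMeasure m v := by
  rw [← toMeasure_map g p .of_discrete]
  refine ⟨(memLp_map_measure_iff .of_discrete .of_discrete).2 h.1, ?_, ?_⟩
  · rw [integral_map .of_discrete .of_discrete]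
    exact h.2.1
  · rw [variance_map .of_discrete .of_discrete]
    exact h.2.2

theorem hasMeanVar_bind [Fintype α] [MeasurableSpace α] [MeasurableSingletonClass α] {p : PMF α}
    {f : α → PMF β} {X : β → ℝ} {M : α → ℝ} {m v w : ℝ}
    (hf : ∀ a, HasMeanVar X (f a).toMeasure (M a) v) (hM : HasMeanVar M p.toMeasure m w) :
    HasMeanVar X (p.bind f).toMeasure m (v + w) := by
  have hM_eq : (fun a => ∫ b, X b ∂(f a).toMeasure) = M := funext fun a => (hf a).2.1
  refine ⟨memLp_two_bind fun a => (hf a).1, ?_, ?_⟩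
  · rw [integral_bind fun a => (hf a).1.integrable one_le_two, hM_eq]
    exact hM.2.1
  · rw [variance_bind fun a => (hf a).1, hM_eq, hM.2.2]
    simp [(hf _).2.2]

theorem hasMeanVar_binomial (q : NNReal) (h : q ≤ 1) (n : ℕ) :
    HasMeanVar (fun i : Fin (n + 1) => ((i : ℕ) : ℝ)) (binomial q h n).toMeasure (n * q)
      (n * q * (1 - q)) :=
  ⟨.of_discrete, integral_binomial_val q h n, variance_binomial_val q h n⟩

end PMF

/-- In the noisy ordered pairwise comparison model with parameters
`k ∈ ℕ` and `p ∈ [0, 1]`, the variance of `X_j` (the follower count of the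
lower-quality creator) equals
`2kp(1 − p) + (1 − 2p)²·kp(1 − p) = kp(1 − p)(2 + (1 − 2p)²)`. -/
theorem variance_Xj (k : ℕ) (p : ℝ) (hp0 : 0 ≤ p) (hp1 : p ≤ 1) :
    variance (fun ω : ℕ × ℕ => ((ω.2 : ℕ) : ℝ)) (noisyPair k p hp0 hp1).toMeasure
      = k * p * (1 - p) * (2 + (1 - 2 * p) ^ 2) := by
  have hq : p.toNNReal ≤ 1 := Real.toNNReal_le_one.mpr hp1
  have hq_coe : (p.toNNReal : ℝ) = p := Real.coe_toNNReal p hp0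
  have hB := PMF.hasMeanVar_binomial p.toNNReal hq
  have hC := PMF.hasMeanVar_binomial (1 - p.toNNReal) tsub_le_self
  simp only [hq_coe] at hB
  simp only [NNReal.coe_sub hq, NNReal.coe_one, hq_coe] at hC
  -- One `hasMeanVar_bind` per draw x, b₁, b₂, c, d: each conditional mean is affine in the
  -- value drawn, and each conditional variance is independent of it.
  refine (PMF.hasMeanVar_bind (v := 2 * k * p * (1 - p)) (fun x => ?_)
    ((hB k).const_add_mul (2 * k * p) (1 - 2 * p))).2.2.trans (by ring)
  have hx : ((k - x : ℕ) : ℝ) = k - x := Nat.cast_sub x.is_le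
  refine (PMF.hasMeanVar_bind (fun b₁ => ?_) (HasMeanVar.const _)).congr rfl (add_zero _)
  refine (PMF.hasMeanVar_bind (v := k * p * (1 - p)) (fun b₂ => ?_)
    ((hB k).const_add_mul (x * (1 - p) + (k - x) * p) 1)).congr (by ring) (by ring)
  refine (PMF.hasMeanVar_bind (v := (k - x) * p * (1 - p)) (fun c => ?_)
    ((hC x).const_add_mul (b₂ + (k - x) * p) 1)).congr (by ring) (by ring)
  refine PMF.hasMeanVar_map ((PMF.hasMeanVar_bind (fun d => (PMF.hasMeanVar_pure _ _).congr ?_ rfl)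
    ((hB (k - x)).const_add_mul (b₂ + c) 1)).congr (by rw [hx]; ring) (by rw [hx]; ring))
  simp
end

section
/- In the noisy ordered pairwise comparison model with parameters k ∈ ℕ and p ∈ ℝ with 1/2 < p < 1: if k ≥ 20(1 − p)(3 + 4p²) / (p·(2p − 1)²), then the probability that X_i > X_j is at least 0.95; i.e., with probability at least 95% the higher-quality creator ends the single ordered pairwise comparison with strictly more followers than the lower-quality creator. -/
/-!
Chebyshev's inequality for `D = X_i - X_j` around its mean `m = kp(2p - 1)`: on the event
`D ≤ 0` we have `(D - m)² ≥ m²`, so the event has probability at most `Var D / m²`, and the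
bound on `k` makes this at most `1/20`. The second moment of `D - m` is computed one sampling
layer at a time, innermost first: each layer averages a quadratic in the freshly drawn binomial
variable, and the Bernstein polynomial identities (total mass `1`, mean `nr`, variance
`nr(1 - r)`) turn it into a quadratic in the variables drawn before, with the same shape.
-/

open MeasureTheory ProbabilityTheory

open Finset Polynomial
open scoped ENNReal NNReal
set_option linter.deprecated false

theorem bernsteinPolynomial.sum_eval_mul_sq_add (n : ℕ) (r a b v : ℝ) :
    ∑ ν ∈ range (n + 1), (bernsteinPolynomial ℝ n ν).eval r * ((a - b * ν) ^ 2 + v) =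
      (a - b * (n * r)) ^ 2 + b ^ 2 * (n * r * (1 - r)) + v := by
  have h0 := congrArg (eval r) (bernsteinPolynomial.sum ℝ n)
  have h1 := congrArg (eval r) (bernsteinPolynomial.sum_smul ℝ n)
  have h2 := congrArg (eval r) (bernsteinPolynomial.variance ℝ n)
  simp only [eval_finsetSum, eval_mul, eval_pow, eval_sub, eval_X, eval_one, eval_natCast,
    nsmul_eq_mul] at h0 h1 h2
  set c := a - b * (n * r)
  have hsplit : ∀ ν : ℕ, (bernsteinPolynomial ℝ n ν).eval r * ((a - b * ν) ^ 2 + v) =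
      (c ^ 2 + v + 2 * c * b * (n * r)) * (bernsteinPolynomial ℝ n ν).eval r
        - 2 * c * b * (ν * (bernsteinPolynomial ℝ n ν).eval r)
        + b ^ 2 * ((n * r - ν) ^ 2 * (bernsteinPolynomial ℝ n ν).eval r) := by
    intro ν; ring
  rw [sum_congr rfl fun ν _ => hsplit ν, sum_add_distrib, sum_sub_distrib, ← mul_sum, ← mul_sum,
    ← mul_sum, h0, h1, h2]
  ring

namespace PMF

theorem binomial_apply_eq_ofReal_eval (r : ℝ≥0) (h : r ≤ 1) (n : ℕ) (i : Fin (n + 1)) :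
    binomial r h n i = ENNReal.ofReal ((bernsteinPolynomial ℝ n i).eval (r : ℝ)) := by
  have h1r : 1 - (r : ℝ) = ((1 - r : ℝ≥0) : ℝ) := by rw [NNReal.coe_sub h, NNReal.coe_one]
  simp only [bernsteinPolynomial, eval_mul, eval_pow, eval_sub, eval_X, eval_one, eval_natCast,
    h1r, binomial_apply, Fin.val_last]
  norm_cast
  rw [ENNReal.ofReal_coe_nnreal]
  push_cast [ENNReal.coe_sub]
  ring

theorem tsum_binomial_mul_ofReal_sq_add {r : ℝ≥0} (h : r ≤ 1) {n : ℕ} {F : Fin (n + 1) → ℝ≥0∞}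
    {a b v : ℝ} (hv : 0 ≤ v) (hF : ∀ i, F i = ENNReal.ofReal ((a - b * i) ^ 2 + v)) :
    ∑' i, binomial r h n i * F i =
      ENNReal.ofReal ((a - b * (n * r)) ^ 2 + b ^ 2 * (n * r * (1 - r)) + v) := by
  have hB : ∀ ν, 0 ≤ (bernsteinPolynomial ℝ n ν).eval (r : ℝ) := fun ν => by
    have : (0 : ℝ) ≤ 1 - r := sub_nonneg.2 (mod_cast h)
    simp only [bernsteinPolynomial, eval_mul, eval_pow, eval_sub, eval_X, eval_one, eval_natCast]
    positivity
  simp_rw [hF, binomial_apply_eq_ofReal_eval, ← ENNReal.ofReal_mul (hB _), tsum_fintype]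
  rw [← ENNReal.ofReal_sum_of_nonneg fun ν _ => by positivity [hB ν],
    Fin.sum_univ_eq_sum_range (fun ν => (bernsteinPolynomial ℝ n ν).eval (r : ℝ) *
      ((a - b * ν) ^ 2 + v)), bernsteinPolynomial.sum_eval_mul_sq_add]

variable {α β : Type*}

theorem tsum_bind_mul (μ : PMF α) (f : α → PMF β) (g : β → ℝ≥0∞) :
    ∑' b, μ.bind f b * g b = ∑' a, μ a * ∑' b, f a b * g b := by
  simp only [bind_apply, ← ENNReal.tsum_mul_right, ← ENNReal.tsum_mul_left, mul_assoc]
  exact ENNReal.tsum_comm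

theorem tsum_pure_mul (a : α) (g : α → ℝ≥0∞) : ∑' b, pure a b * g b = g a := by
  simp [pure_apply]

theorem tsum_map_mul (μ : PMF α) (f : α → β) (g : β → ℝ≥0∞) :
    ∑' b, μ.map f b * g b = ∑' a, μ a * g (f a) := by
  simp only [← bind_pure_comp, tsum_bind_mul, Function.comp_apply, tsum_pure_mul]

theorem toMeasure_setOf_nonpos_le [MeasurableSpace α] [DiscreteMeasurableSpace α] (μ : PMF α)
    (f : α → ℝ) {m : ℝ} (hm : 0 < m) :
    μ.toMeasure {a | f a ≤ 0} ≤
      (∑' a, μ a * ENNReal.ofReal ((f a - m) ^ 2)) / ENNReal.ofReal (m ^ 2) := by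
  rw [toMeasure_apply_eq_toOuterMeasure_apply _ .of_discrete, toOuterMeasure_apply,
    ENNReal.le_div_iff_mul_le (by simp [hm.ne']) (by simp), ← ENNReal.tsum_mul_right]
  refine ENNReal.tsum_le_tsum fun a => ?_
  rw [Set.indicator_apply]
  split_ifs with ha
  · have : f a ≤ 0 := ha
    exact mul_le_mul' le_rfl (ENNReal.ofReal_le_ofReal (by nlinarith))
  · simp

end PMF

theorem tsum_noisyPair_mul_ofReal_sq (k : ℕ) {p : ℝ} (hp0 : 0 ≤ p) (hp1 : p ≤ 1) (m : ℝ) :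
    ∑' ω, noisyPair k p hp0 hp1 ω * ENNReal.ofReal (((ω.1 : ℝ) - ω.2 - m) ^ 2) =
      ENNReal.ofReal ((k * p * (2 * p - 1) - m) ^ 2 + k * p * (1 - p) * (3 + 4 * p ^ 2)) := by
  have hq : (Real.toNNReal p : ℝ) = p := Real.coe_toNNReal p hp0
  have hq' : ((1 - Real.toNNReal p : ℝ≥0) : ℝ) = 1 - p := by
    rw [NNReal.coe_sub (Real.toNNReal_le_one.mpr hp1), NNReal.coe_one, hq]
  simp only [noisyPair, bind, pure, PMF.tsum_bind_mul, PMF.tsum_map_mul, PMF.tsum_pure_mul]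
  -- In each layer, `a - b * i` is the conditional mean of `X_i - X_j - m` given the draws so far.
  rw [PMF.tsum_binomial_mul_ofReal_sq_add _ (a := -(k * p + m)) (b := -2 * p)
    (v := 3 * (k * (p * (1 - p)))) (by positivity) fun x => ?_]
  · congr 1; rw [hq]; ring
  have hx : ((k - x : ℕ) : ℝ) = k - x := Nat.cast_sub x.is_le
  rw [PMF.tsum_binomial_mul_ofReal_sq_add _ (a := 2 * p * x - 2 * k * p - m) (b := -1)
    (v := 2 * (k * (p * (1 - p)))) (by positivity) fun b₁ => ?_]
  · congr 1; rw [hq]; ring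
  rw [PMF.tsum_binomial_mul_ofReal_sq_add _ (a := 2 * p * x - k * p - m + b₁) (b := 1)
    (v := k * (p * (1 - p))) (by positivity) fun b₂ => ?_]
  · congr 1; rw [hq]; ring
  rw [PMF.tsum_binomial_mul_ofReal_sq_add _ (a := b₁ + x - b₂ - m - (k - x) * p) (b := 1)
    (v := (k - x : ℕ) * (p * (1 - p))) (by positivity) fun c => ?_]
  · congr 1; rw [hq', hx]; ring
  rw [PMF.tsum_binomial_mul_ofReal_sq_add _ (a := b₁ + x - b₂ - c - m) (b := 1)
    (v := 0) le_rfl fun d => ?_]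
  · congr 1; rw [hq, hx]; ring
  congr 1; push_cast; ring

theorem noisyPair_toMeasure_fst_le_snd_le (k : ℕ) {p : ℝ} (hp0 : 0 ≤ p) (hp1 : p ≤ 1)
    (hmean : 0 < k * p * (2 * p - 1)) :
    (noisyPair k p hp0 hp1).toMeasure {ω | ω.1 ≤ ω.2} ≤
      ENNReal.ofReal (k * p * (1 - p) * (3 + 4 * p ^ 2) / (k * p * (2 * p - 1)) ^ 2) :=
  calc (noisyPair k p hp0 hp1).toMeasure {ω | ω.1 ≤ ω.2}
      _ = (noisyPair k p hp0 hp1).toMeasure {ω | (ω.1 : ℝ) - ω.2 ≤ 0} := by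
        simp only [sub_nonpos, Nat.cast_le]
      _ ≤ _ := PMF.toMeasure_setOf_nonpos_le _ _ hmean
      _ = _ := by
        rw [tsum_noisyPair_mul_ofReal_sq, sub_self, ENNReal.ofReal_div_of_pos (by positivity)]
        ring_nf

/-- In the noisy ordered pairwise comparison model with parameters
`k ∈ ℕ` and `p ∈ ℝ` with `1/2 < p < 1`: if `k ≥ 20(1 − p)(3 + 4p²)/(p·(2p − 1)²)`,
then with probability at least `0.95` the higher-quality creator ends the single
ordered pairwise comparison with strictly more followers than the lower-quality
creator, i.e. `P(X_i > X_j) ≥ 0.95`. -/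
theorem pairwise_comparison_group_size (k : ℕ) (p : ℝ) (hp : 1 / 2 < p) (hp1 : p < 1)
    (hk : (k : ℝ) ≥ 20 * (1 - p) * (3 + 4 * p ^ 2) / (p * (2 * p - 1) ^ 2)) :
    ENNReal.ofReal 0.95 ≤
      (noisyPair k p (by linarith) (le_of_lt hp1)).toMeasure
        {ω : ℕ × ℕ | ω.2 < ω.1} := by
  have hp0 : 0 < p := by linarith
  have h1p : 0 < 1 - p := by linarith
  have h2p : 0 < 2 * p - 1 := by linarith
  have hk' : 20 * (1 - p) * (3 + 4 * p ^ 2) ≤ k * (p * (2 * p - 1) ^ 2) :=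
    (div_le_iff₀ (by positivity)).1 hk
  have hk0 : (0 : ℝ) < k :=
    pos_of_mul_pos_left ((show (0 : ℝ) < _ by positivity).trans_le hk') (by positivity)
  have hvar : k * p * (1 - p) * (3 + 4 * p ^ 2) / (k * p * (2 * p - 1)) ^ 2 ≤ 1 / 20 := by
    rw [div_le_iff₀ (by positivity)]
    linear_combination (k * p / 20) * hk'
  have hfail := (noisyPair_toMeasure_fst_le_snd_le k hp0.le hp1.le (by positivity)).trans
    (ENNReal.ofReal_le_ofReal hvar)
  have hcompl : {ω : ℕ × ℕ | ω.2 < ω.1} = {ω | ω.1 ≤ ω.2}ᶜ := by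
    ext ω
    simp
  rw [hcompl, prob_compl_eq_one_sub .of_discrete]
  calc ENNReal.ofReal 0.95 = 1 - ENNReal.ofReal (1 / 20) := by
        rw [← ENNReal.ofReal_one, ← ENNReal.ofReal_sub _ (by norm_num)]
        norm_num
    _ ≤ _ := tsub_le_tsub_left hfail 1
end
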